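/- With h(ξ) := ξ^{1/3}((1+√(1+ξ))^{1/3} + (1−√(1+ξ))^{1/3}) for ξ > 0, one has h(ξ) = 2/3 − 8/(81ξ) + o(1/ξ) as ξ → +∞. -/

import Mathlib

/-!
Writing `s = √(1+ξ)`, the two cube roots `a = ∛(1+s)` and `b = ∛(1-s)` satisfy `a³ + b³ = 2` and
`ab = -∛ξ`, so `h = ∛ξ (a + b)` is a real root of `h³ + 3ξh = 2ξ` (Cardano). Dividing by `ξ` gives
`h = 2 / (3 + h²/ξ)`, and as this root lies in `(0, 2/3)` one gets `h → 2/3` and then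
`ξ (h - 2/3) = -2h² / (3 (3 + h²/ξ)) → -8/81`.
-/

open Real Filter Asymptotics Topology

noncomputable def cbrt (x : ℝ) : ℝ := Real.sign x * |x| ^ ((1 : ℝ)/3)

noncomputable def hFun (ξ : ℝ) : ℝ :=
  cbrt ξ * (cbrt (1 + Real.sqrt (1 + ξ)) + cbrt (1 - Real.sqrt (1 + ξ)))

lemma cbrt_of_pos {x : ℝ} (hx : 0 < x) : cbrt x = x ^ ((1 : ℝ)/3) := by
  rw [cbrt, Real.sign_of_pos hx, abs_of_pos hx, one_mul]

lemma cbrt_of_neg {x : ℝ} (hx : x < 0) : cbrt x = -(-x) ^ ((1 : ℝ)/3) := by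
  rw [cbrt, Real.sign_of_neg hx, abs_of_neg hx, neg_one_mul]

lemma rpow_one_third_pow_three {x : ℝ} (hx : 0 ≤ x) : (x ^ ((1 : ℝ)/3)) ^ 3 = x := by
  simpa using Real.rpow_inv_natCast_pow hx three_ne_zero

lemma hFun_cubic {ξ : ℝ} (hξ : 0 < ξ) : hFun ξ ^ 3 + 3 * ξ * hFun ξ = 2 * ξ := by
  set s := √(1 + ξ)
  have hs_sq : s ^ 2 = 1 + ξ := Real.sq_sqrt (by linarith)
  have hs_gt : 1 < s := by nlinarith [Real.sqrt_nonneg (1 + ξ)]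
  set t := ξ ^ ((1 : ℝ)/3)
  set a := (1 + s) ^ ((1 : ℝ)/3)
  set b := (s - 1) ^ ((1 : ℝ)/3)
  have ht : t ^ 3 = ξ := rpow_one_third_pow_three hξ.le
  have ha : a ^ 3 = 1 + s := rpow_one_third_pow_three (by linarith)
  have hb : b ^ 3 = s - 1 := rpow_one_third_pow_three (by linarith)
  have hab : a * b = t := by
    rw [← Real.mul_rpow (by linarith) (by linarith)]
    congr 1
    nlinarith
  have hFun_eq : hFun ξ = t * (a - b) := by
    rw [hFun, cbrt_of_pos hξ, cbrt_of_pos (by linarith : 0 < 1 + s),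
      cbrt_of_neg (by linarith : 1 - s < 0), neg_sub]
    ring
  rw [hFun_eq, ← ht]
  linear_combination t ^ 3 * ha - t ^ 3 * hb - 3 * t ^ 3 * (a - b) * hab

section Cubic

variable {ξ y : ℝ}

lemma pos_of_cubic (hξ : 0 < ξ) (h : y ^ 3 + 3 * ξ * y = 2 * ξ) : 0 < y := by
  nlinarith [sq_nonneg y]

lemma lt_two_thirds_of_cubic (hξ : 0 < ξ) (h : y ^ 3 + 3 * ξ * y = 2 * ξ) : y < 2 / 3 := by
  have hy := pos_of_cubic hξ h
  nlinarith [pow_pos hy 3]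

lemma eq_two_div_of_cubic (hξ : 0 < ξ) (h : y ^ 3 + 3 * ξ * y = 2 * ξ) :
    y = 2 / (3 + y ^ 2 / ξ) := by
  have hq : 0 < 3 + y ^ 2 / ξ := by positivity
  field_simp
  linear_combination h

lemma mul_sub_two_thirds_of_cubic (hξ : 0 < ξ) (h : y ^ 3 + 3 * ξ * y = 2 * ξ) :
    ξ * (y - 2 / 3) = -2 * y ^ 2 / (3 * (3 + y ^ 2 / ξ)) := by
  have hq : 0 < 3 + y ^ 2 / ξ := by positivity
  field_simp
  linear_combination 3 * h

end Cubic

section CubicBranch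

variable {y : ℝ → ℝ} (hy : ∀ᶠ ξ in atTop, y ξ ^ 3 + 3 * ξ * y ξ = 2 * ξ)
include hy

lemma tendsto_sq_div_of_cubic : Tendsto (fun ξ => y ξ ^ 2 / ξ) atTop (𝓝 0) := by
  have hupper : Tendsto (fun ξ : ℝ => (2 / 3) ^ 2 * ξ⁻¹) atTop (𝓝 0) := by
    simpa using tendsto_inv_atTop_zero.const_mul ((2 / 3 : ℝ) ^ 2)
  refine tendsto_of_tendsto_of_tendsto_of_le_of_le' tendsto_const_nhds hupper ?_ ?_
  all_goals filter_upwards [hy, eventually_gt_atTop 0] with ξ h hξ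
  · positivity
  · have hy0 := pos_of_cubic hξ h
    rw [div_eq_mul_inv]
    gcongr
    exact (lt_two_thirds_of_cubic hξ h).le

lemma tendsto_of_cubic : Tendsto y atTop (𝓝 (2 / 3)) := by
  have hlim : Tendsto (fun ξ => 2 / (3 + y ξ ^ 2 / ξ)) atTop (𝓝 (2 / (3 + 0))) :=
    tendsto_const_nhds.div (tendsto_const_nhds.add (tendsto_sq_div_of_cubic hy)) (by norm_num)
  rw [show (2 / 3 : ℝ) = 2 / (3 + 0) by norm_num]
  refine hlim.congr' ?_
  filter_upwards [hy, eventually_gt_atTop 0] with ξ h hξ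
  exact (eq_two_div_of_cubic hξ h).symm

lemma tendsto_mul_sub_two_thirds_of_cubic :
    Tendsto (fun ξ => ξ * (y ξ - 2 / 3)) atTop (𝓝 (-8 / 81)) := by
  have hlim : Tendsto (fun ξ => -2 * y ξ ^ 2 / (3 * (3 + y ξ ^ 2 / ξ))) atTop
      (𝓝 (-2 * (2 / 3) ^ 2 / (3 * (3 + 0)))) :=
    (((tendsto_of_cubic hy).pow 2).const_mul _).div
      ((tendsto_const_nhds.add (tendsto_sq_div_of_cubic hy)).const_mul _) (by norm_num)
  rw [show (-8 / 81 : ℝ) = -2 * (2 / 3) ^ 2 / (3 * (3 + 0)) by norm_num]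
  refine hlim.congr' ?_
  filter_upwards [hy, eventually_gt_atTop 0] with ξ h hξ
  exact (mul_sub_two_thirds_of_cubic hξ h).symm

lemma isLittleO_of_cubic :
    (fun ξ : ℝ => y ξ - (2 / 3 - 8 / (81 * ξ))) =o[atTop] (fun ξ : ℝ => 1 / ξ) := by
  have hpos : ∀ᶠ ξ : ℝ in atTop, 0 < ξ := eventually_gt_atTop 0
  rw [isLittleO_iff_tendsto' (hpos.mono fun ξ hξ h => absurd h (by positivity))]
  have hlim := (tendsto_mul_sub_two_thirds_of_cubic hy).add_const (8 / 81)
  rw [show (-8 / 81 + 8 / 81 : ℝ) = 0 by norm_num] at hlim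
  refine hlim.congr' ?_
  filter_upwards [hpos] with ξ hξ
  field_simp
  ring

end CubicBranch

/-- `h(ξ) = 2/3 - 8/(81ξ) + o(1/ξ)` as `ξ → +∞`. -/
theorem stmt_4 :
    (fun ξ : ℝ => hFun ξ - (2/3 - 8 / (81 * ξ))) =o[atTop] (fun ξ : ℝ => 1 / ξ) :=
  isLittleO_of_cubic ((eventually_gt_atTop 0).mono fun _ => hFun_cubic)
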